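/- Let d ≥ 1. The subfield of ℂ(y_1,…,y_d) generated over ℂ by the 3d−1 elements u_1,…,u_{3d−1} is all of ℂ(y_1,…,y_d). -/
import Mathlib

set_option maxHeartbeats 1000000
set_option synthInstance.maxHeartbeats 400000


noncomputable section

/-- The polynomial ring `ℂ[y_1, …, y_d]`. -/
abbrev PolyRing (d : ℕ) := MvPolynomial (Fin d) ℂ

/-- The field `ℂ(y_1, …, y_d)` of rational functions. -/
abbrev RatFld (d : ℕ) := FractionRing (PolyRing d)

/-- The rational function `y_k` (0-indexed; junk value `0` out of range). -/
def yy (d k : ℕ) : RatFld d :=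
  if h : k < d then algebraMap (PolyRing d) (RatFld d) (MvPolynomial.X ⟨k, h⟩) else 0

/-- `p_k = 1 + y_k` (0-indexed). -/
def pp (d k : ℕ) : RatFld d := 1 + yy d k

/-- `q_k = 1 + y_k + y_k y_{k+1}` (0-indexed). -/
def qq (d k : ℕ) : RatFld d := 1 + yy d k + yy d k * yy d (k + 1)

/-- The rational functions `u_1, …, u_{3d-1}` (0-indexed `r ∈ {0, …, 3d-2}`):
`u_i = y_i p_{i+1} / q_i` for `1 ≤ i ≤ d-1`, `u_d = y_d / p_d`, `u_{d+1} = 1/p_1`,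
`u_{d+1+i} = p_i / q_i` for `1 ≤ i ≤ d-1`, and `u_{2d+i} = q_i / (p_i p_{i+1})`
for `1 ≤ i ≤ d-1`. -/
def uu (d r : ℕ) : RatFld d :=
  if r < d - 1 then yy d r * pp d (r + 1) / qq d r
  else if r = d - 1 then yy d (d - 1) / pp d (d - 1)
  else if r = d then 1 / pp d 0
  else if r < 2 * d then pp d (r - d - 1) / qq d (r - d - 1)
  else qq d (r - 2 * d) / (pp d (r - 2 * d) * pp d (r - 2 * d + 1))

end

open MvPolynomial in
private lemma algMap_ne_zero (d : ℕ) {p : PolyRing d} (hp : p ≠ 0) :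
    algebraMap (PolyRing d) (RatFld d) p ≠ 0 :=
  (map_ne_zero_iff _ (IsFractionRing.injective (PolyRing d) (RatFld d))).mpr hp

open MvPolynomial in
private lemma yy_eq (d k : ℕ) (h : k < d) :
    yy d k = algebraMap (PolyRing d) (RatFld d) (X ⟨k, h⟩) := by
  simp [yy, h]

open MvPolynomial in
private lemma yy_ne (d k : ℕ) (h : k < d) : yy d k ≠ 0 := by
  rw [yy_eq d k h]; exact algMap_ne_zero d (X_ne_zero _)

open MvPolynomial in
private lemma pp_ne (d k : ℕ) (h : k < d) : pp d k ≠ 0 := by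
  have : pp d k = algebraMap (PolyRing d) (RatFld d) (1 + X ⟨k, h⟩) := by
    rw [pp, yy_eq d k h, map_add, map_one]
  rw [this]
  refine algMap_ne_zero d fun h0 => ?_
  have := congrArg constantCoeff h0
  simp [constantCoeff_X] at this

open MvPolynomial in
private lemma qq_ne (d k : ℕ) (h : k + 1 < d) : qq d k ≠ 0 := by
  have hk : k < d := by omega
  have : qq d k = algebraMap (PolyRing d) (RatFld d)
      (1 + X ⟨k, hk⟩ + X ⟨k, hk⟩ * X ⟨k + 1, h⟩) := by
    rw [qq, yy_eq d k hk, yy_eq d (k + 1) h, map_add, map_add, map_one, map_mul]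
  rw [this]
  refine algMap_ne_zero d fun h0 => ?_
  have := congrArg constantCoeff h0
  simp [constantCoeff_X] at this

/-- For `d ≥ 1`, the subfield of `ℂ(y_1, …, y_d)` generated over `ℂ` (i.e. including the
image of `ℂ`) by the `3d-1` elements `u_1, …, u_{3d-1}` is all of `ℂ(y_1, …, y_d)`. -/
theorem subfield_closure_u_eq_top (d : ℕ) (hd : 1 ≤ d) :
    Subfield.closure
      (Set.range (fun z : ℂ => algebraMap (PolyRing d) (RatFld d) (MvPolynomial.C z)) ∪
        Set.range (fun i : Fin (3 * d - 1) => uu d i.val)) = ⊤ := by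
  set K := Subfield.closure
      (Set.range (fun z : ℂ => algebraMap (PolyRing d) (RatFld d) (MvPolynomial.C z)) ∪
        Set.range (fun i : Fin (3 * d - 1) => uu d i.val)) with hK
  have hC : ∀ z : ℂ, algebraMap (PolyRing d) (RatFld d) (MvPolynomial.C z) ∈ K :=
    fun z => Subfield.subset_closure (Or.inl ⟨z, rfl⟩)
  have hu : ∀ r : ℕ, r < 3 * d - 1 → uu d r ∈ K :=
    fun r hr => Subfield.subset_closure (Or.inr ⟨⟨r, hr⟩, rfl⟩)
  -- `pp d k ∈ K` whenever `yy d k ∈ K`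
  have hppmem : ∀ k, yy d k ∈ K → pp d k ∈ K := fun k hk => by
    rw [pp]; exact K.add_mem K.one_mem hk
  -- base case: `yy d 0 ∈ K`
  have hud : uu d d = 1 / pp d 0 := by
    unfold uu
    rw [if_neg (by omega), if_neg (by omega), if_pos rfl]
  have hy0 : yy d 0 ∈ K := by
    have hmem : (1 / pp d 0)⁻¹ ∈ K := K.inv_mem (hud ▸ hu d (by omega))
    rw [one_div, inv_inv] at hmem
    have : yy d 0 = pp d 0 - 1 := by rw [pp]; ring
    rw [this]
    exact K.sub_mem hmem K.one_mem
  -- inductive step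
  have hy : ∀ k, k < d → yy d k ∈ K := by
    intro k hk
    induction k with
    | zero => exact hy0
    | succ i ih =>
      have hi : i + 1 < d := hk
      have hiK : yy d i ∈ K := ih (by omega)
      have hur : uu d (d + 1 + i) = pp d i / qq d i := by
        unfold uu
        rw [if_neg (by omega), if_neg (by omega), if_neg (by omega), if_pos (by omega)]
        simp only [show d + 1 + i - d - 1 = i from by omega]
      have hune : uu d (d + 1 + i) ≠ 0 := by
        rw [hur]
        exact div_ne_zero (pp_ne d i (by omega)) (qq_ne d i hi)
      have huK : uu d (d + 1 + i) ∈ K := hu _ (by omega)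
      have hqK : qq d i ∈ K := by
        have : qq d i = pp d i / uu d (d + 1 + i) := by
          rw [hur, div_div_eq_mul_div, mul_div_cancel_left₀ _ (pp_ne d i (by omega))]
        rw [this]
        exact K.div_mem (hppmem i hiK) huK
      have : yy d (i + 1) = (qq d i - 1 - yy d i) / yy d i := by
        rw [qq]
        field_simp [yy_ne d i (by omega)]
        ring
      rw [this]
      exact K.div_mem (K.sub_mem (K.sub_mem hqK K.one_mem) hiK) hiK
  -- all polynomials map into K
  have hpoly : ∀ p : PolyRing d, algebraMap (PolyRing d) (RatFld d) p ∈ K := by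
    intro p
    induction p using MvPolynomial.induction_on with
    | C a => exact hC a
    | add p q hp hq => rw [map_add]; exact K.add_mem hp hq
    | mul_X p n hp =>
      rw [map_mul]
      refine K.mul_mem hp ?_
      have := hy n.1 n.2
      rwa [yy_eq d n.1 n.2, Fin.eta] at this
  -- conclude
  rw [eq_top_iff]
  rintro x -
  obtain ⟨a, b, -, rfl⟩ := IsFractionRing.div_surjective (A := PolyRing d) x
  exact K.div_mem (hpoly a) (hpoly b)
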